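/- arXiv:1410.4361 — 2 statements merged into one kernel-verified Lean document; each statement's English description precedes it below -/
import Mathlib

section
/- Let 1 ≤ k ≤ t be integers and d = C(2t−2k, t−k). Then the d-biclique covering number and the d-biclique partition number of the bi-intersection graph I_{2t}(k,k) both equal C(2t,t), i.e., bc_d(I_{2t}(k,k)) = bp_d(I_{2t}(k,k)) = C(2t,t). -/
open Finset

/-- The vertex set of one side of the bi-intersection graph `I_n(k,k)`:
all `k`-subsets of `{1,…,n}`. -/
abbrev KSubset (n k : ℕ) := {A : Finset (Fin n) // A.card = k}

/-- A family of `c` bicliques of the bi-intersection graph `I_n(k,k)` (whose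
two sides are two disjoint copies of the `k`-subsets of an `n`-set, a left
`k`-subset being adjacent to a right `k`-subset iff they are disjoint):
each biclique is given by a set `X i` of left vertices and a set `Y i` of
right vertices, all cross pairs being adjacent (i.e. disjoint as sets). -/
def IsBicliqueFamily (n k c : ℕ) (X Y : Fin c → Finset (KSubset n k)) : Prop :=
  ∀ i : Fin c, ∀ a ∈ X i, ∀ b ∈ Y i, Disjoint a.1 b.1

/-- `bc_d(I_n(k,k))`: the minimum number of bicliques of the bi-intersection
graph `I_n(k,k)` such that every edge (i.e. every disjoint pair consisting of
a left `k`-subset and a right `k`-subset) lies in at least `d` of them. -/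
noncomputable def bcBiIntersection (n k d : ℕ) : ℕ :=
  sInf {c : ℕ | ∃ X Y : Fin c → Finset (KSubset n k),
    IsBicliqueFamily n k c X Y ∧
    ∀ a b : KSubset n k, Disjoint a.1 b.1 →
      d ≤ (Finset.univ.filter (fun i => a ∈ X i ∧ b ∈ Y i)).card}

/-- `bp_d(I_n(k,k))`: the minimum number of bicliques of the bi-intersection
graph `I_n(k,k)` such that every edge lies in exactly `d` of them. -/
noncomputable def bpBiIntersection (n k d : ℕ) : ℕ :=
  sInf {c : ℕ | ∃ X Y : Fin c → Finset (KSubset n k),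
    IsBicliqueFamily n k c X Y ∧
    ∀ a b : KSubset n k, Disjoint a.1 b.1 →
      (Finset.univ.filter (fun i => a ∈ X i ∧ b ∈ Y i)).card = d}

/-!
For each `t`-subset `S` of the `2t`-set, the `k`-subsets of `S` versus the `k`-subsets of its
complement form a biclique; a disjoint pair `(a, b)` lies in one such biclique for each
`(t - k)`-subset of the complement of `a ∪ b`, i.e. in exactly `C(2t-2k, t-k)` of them.

Conversely, in a biclique `(X, Y)` all of `X` lies inside some set `U` and all of `Y` outside it,
so `|X| |Y| ≤ C(|U|, k) C(2t - |U|, k) ≤ C(t, k)²` (compare the falling factorials factor by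
factor, by AM–GM). Counting the `C(2t, k) C(2t-k, k)` edges `d` times each therefore needs at
least `d C(2t, k) C(2t-k, k) / C(t, k)² = C(2t, t)` bicliques.
-/

section KSubsets

variable {α : Type*} [Fintype α] {k : ℕ}

lemma card_filter_subtype_card_eq_card_filter_powersetCard (p : Finset α → Prop)
    [DecidablePred p] :
    #{A : {A : Finset α // #A = k} | p A.1} = #{A ∈ powersetCard k univ | p A} := by
  refine card_bij (fun A _ => A.1) (fun A hA => ?_) (fun _ _ _ _ => Subtype.ext) fun A hA => ?_
  · simpa [mem_powersetCard] using ⟨A.2, (mem_filter.1 hA).2⟩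
  · simp only [mem_filter, mem_powersetCard] at hA
    exact ⟨⟨A, hA.1.2⟩, by simpa using hA.2, rfl⟩

variable [DecidableEq α]

lemma card_filter_subset_eq_choose (s : Finset α) :
    #{A : {A : Finset α // #A = k} | A.1 ⊆ s} = (#s).choose k := by
  rw [card_filter_subtype_card_eq_card_filter_powersetCard (· ⊆ s), ← card_powersetCard]
  congr 1
  ext A
  simp [mem_powersetCard, and_comm]

lemma card_filter_disjoint_eq_choose (a : Finset α) :
    #{B : {B : Finset α // #B = k} | Disjoint a B.1} = (Fintype.card α - #a).choose k := by
  simp_rw [disjoint_comm (a := a), ← subset_compl_iff_disjoint_right,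
    card_filter_subset_eq_choose, card_compl]

lemma card_filter_superset_disjoint_eq_choose {t : ℕ} {a b : Finset α} (hab : Disjoint a b)
    (hat : #a ≤ t) :
    #{S : {S : Finset α // #S = t} | a ⊆ S.1 ∧ Disjoint S.1 b} =
      (Fintype.card α - #b - #a).choose (t - #a) := by
  rw [card_filter_subtype_card_eq_card_filter_powersetCard (fun S => a ⊆ S ∧ Disjoint S b),
    ← card_compl,
    ← card_filter_powersetCard_subset a bᶜ t (subset_compl_iff_disjoint_right.2 hab) hat]
  congr 1
  ext S
  simp only [mem_filter, mem_powersetCard, subset_univ, subset_compl_iff_disjoint_right]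
  tauto

end KSubsets

lemma sum_card_mul_card_eq_sum_sum_card_filter {ι β γ : Type*} [Fintype ι] [Fintype β]
    [Fintype γ] [DecidableEq β] [DecidableEq γ] (X : ι → Finset β) (Y : ι → Finset γ) :
    ∑ i, #(X i) * #(Y i) = ∑ a, ∑ b, #{i | a ∈ X i ∧ b ∈ Y i} := by
  calc ∑ i, #(X i) * #(Y i) = ∑ i, #{p : β × γ | p.1 ∈ X i ∧ p.2 ∈ Y i} := by
        simp_rw [← card_product, ← mem_product, filter_mem_eq_inter, univ_inter]
    _ = ∑ p : β × γ, #{i | p.1 ∈ X i ∧ p.2 ∈ Y i} :=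
        sum_card_bipartiteAbove_eq_sum_card_bipartiteBelow _
    _ = ∑ a, ∑ b, #{i | a ∈ X i ∧ b ∈ Y i} := Fintype.sum_prod_type _

lemma Nat.choose_mul_choose_le_sq {u v t : ℕ} (k : ℕ) (h : u + v = 2 * t) :
    u.choose k * v.choose k ≤ t.choose k ^ 2 := by
  have factor : ∀ i, (u - i) * (v - i) ≤ (t - i) * (t - i) := by
    intro i
    rcases lt_or_ge u i with hu | hu
    · simp [Nat.sub_eq_zero_of_le hu.le]
    rcases lt_or_ge v i with hv | hv
    · simp [Nat.sub_eq_zero_of_le hv.le]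
    zify [hu, hv, (by omega : i ≤ t)]
    nlinarith [sq_nonneg ((u : ℤ) - v)]
  have key : u.descFactorial k * v.descFactorial k ≤ t.descFactorial k * t.descFactorial k := by
    simp only [descFactorial_eq_prod_range, ← prod_mul_distrib]
    exact prod_le_prod' fun i _ => factor i
  simp only [descFactorial_eq_factorial_mul_choose] at key
  refine Nat.le_of_mul_le_mul_left (c := k.factorial * k.factorial) ?_
    (Nat.mul_pos k.factorial_pos k.factorial_pos)
  linarith

-- Both sides count the words of length 2t with k letters of each of two kinds and t - k of each of two others.
lemma Nat.choose_two_mul_sub_mul_choose_mul_choose {k t : ℕ} (hkt : k ≤ t) :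
    (2 * t - 2 * k).choose (t - k) * ((2 * t).choose k * (2 * t - k).choose k) =
      (2 * t).choose t * t.choose k ^ 2 := by
  have h₁ := Nat.choose_mul (n := 2 * t) hkt
  have h₂ := Nat.choose_mul (n := 2 * t - k) hkt
  have h₃ : (2 * t - k).choose (t - k) = (2 * t - k).choose t :=
    Nat.choose_symm_of_eq_add (by omega)
  rw [show 2 * t - k - k = 2 * t - 2 * k by omega] at h₂
  calc (2 * t - 2 * k).choose (t - k) * ((2 * t).choose k * (2 * t - k).choose k)
      = (2 * t).choose k * ((2 * t - k).choose t * t.choose k) := by rw [h₂]; ring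
    _ = (2 * t).choose k * (2 * t - k).choose (t - k) * t.choose k := by rw [h₃]; ring
    _ = (2 * t).choose t * t.choose k ^ 2 := by rw [← h₁]; ring

lemma card_mul_card_le_choose_sq {α : Type*} [Fintype α] [DecidableEq α] {k t : ℕ}
    (hα : Fintype.card α = 2 * t) {X Y : Finset {A : Finset α // #A = k}}
    (hXY : ∀ a ∈ X, ∀ b ∈ Y, Disjoint a.1 b.1) :
    #X * #Y ≤ t.choose k ^ 2 := by
  set U := X.sup (·.1)
  have hX : #X ≤ (#U).choose k := by
    rw [← card_filter_subset_eq_choose]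
    exact card_le_card fun a ha => mem_filter.2 ⟨mem_univ _, le_sup (f := (·.1)) ha⟩
  have hY : #Y ≤ (Fintype.card α - #U).choose k := by
    rw [← card_filter_disjoint_eq_choose]
    exact card_le_card fun b hb =>
      mem_filter.2 ⟨mem_univ _, Finset.disjoint_sup_left.2 fun a ha => hXY a ha b hb⟩
  calc #X * #Y ≤ (#U).choose k * (Fintype.card α - #U).choose k := Nat.mul_le_mul hX hY
    _ ≤ t.choose k ^ 2 := Nat.choose_mul_choose_le_sq k (by have := card_le_univ U; omega)

lemma mul_choose_le_of_isBicliqueFamily {k t c d : ℕ} {X Y : Fin c → Finset (KSubset (2 * t) k)}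
    (hB : IsBicliqueFamily (2 * t) k c X Y)
    (hcov : ∀ a b : KSubset (2 * t) k, Disjoint a.1 b.1 → d ≤ #{i | a ∈ X i ∧ b ∈ Y i}) :
    d * ((2 * t).choose k * (2 * t - k).choose k) ≤ c * t.choose k ^ 2 :=
  calc d * ((2 * t).choose k * (2 * t - k).choose k)
      = ∑ a : KSubset (2 * t) k, ∑ b ∈ {b : KSubset (2 * t) k | Disjoint a.1 b.1}, d := by
        simp only [sum_const, card_filter_disjoint_eq_choose, Fintype.card_fin,
          fun a : KSubset (2 * t) k => a.2, smul_eq_mul, card_univ, Fintype.card_finset_len]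
        ring
    _ ≤ ∑ a : KSubset (2 * t) k, ∑ b ∈ {b : KSubset (2 * t) k | Disjoint a.1 b.1},
          #{i | a ∈ X i ∧ b ∈ Y i} :=
        sum_le_sum fun a _ => sum_le_sum fun b hb => hcov a b (mem_filter.1 hb).2
    _ ≤ ∑ a : KSubset (2 * t) k, ∑ b : KSubset (2 * t) k, #{i | a ∈ X i ∧ b ∈ Y i} :=
        sum_le_sum fun a _ => sum_le_sum_of_subset (filter_subset _ _)
    _ = ∑ i, #(X i) * #(Y i) := (sum_card_mul_card_eq_sum_sum_card_filter X Y).symm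
    _ ≤ ∑ _i : Fin c, t.choose k ^ 2 :=
        sum_le_sum fun i _ => card_mul_card_le_choose_sq (by simp) (hB i)
    _ = c * t.choose k ^ 2 := by simp

lemma choose_le_of_isBicliqueFamily {k t c : ℕ} (hkt : k ≤ t)
    {X Y : Fin c → Finset (KSubset (2 * t) k)} (hB : IsBicliqueFamily (2 * t) k c X Y)
    (hcov : ∀ a b : KSubset (2 * t) k, Disjoint a.1 b.1 →
      (2 * t - 2 * k).choose (t - k) ≤ #{i | a ∈ X i ∧ b ∈ Y i}) :
    (2 * t).choose t ≤ c := by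
  have h := mul_choose_le_of_isBicliqueFamily hB hcov
  rw [Nat.choose_two_mul_sub_mul_choose_mul_choose hkt] at h
  exact Nat.le_of_mul_le_mul_right h (pow_pos (Nat.choose_pos hkt) 2)

lemma exists_isBicliqueFamily_card_filter_eq {k t : ℕ} (hkt : k ≤ t) :
    ∃ X Y : Fin ((2 * t).choose t) → Finset (KSubset (2 * t) k),
      IsBicliqueFamily (2 * t) k _ X Y ∧ ∀ a b : KSubset (2 * t) k, Disjoint a.1 b.1 →
        #{i | a ∈ X i ∧ b ∈ Y i} = (2 * t - 2 * k).choose (t - k) := by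
  let e : KSubset (2 * t) t ≃ Fin ((2 * t).choose t) :=
    Fintype.equivFinOfCardEq (by simp [Fintype.card_finset_len])
  refine ⟨fun i => {a | a.1 ⊆ (e.symm i).1}, fun i => {b | Disjoint (e.symm i).1 b.1},
    fun i a ha b hb => (mem_filter.1 hb).2.mono_left (mem_filter.1 ha).2, fun a b hab => ?_⟩
  calc _ = #{S : KSubset (2 * t) t | a.1 ⊆ S.1 ∧ Disjoint S.1 b.1} :=
        card_equiv e.symm fun i => by simp
    _ = (2 * t - 2 * k).choose (t - k) := by
        rw [card_filter_superset_disjoint_eq_choose hab (a.2.trans_le hkt), a.2, b.2]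
        simp only [Fintype.card_fin]
        congr 1
        omega

theorem stmt_3_general (k t : ℕ) (hkt : k ≤ t) :
    bcBiIntersection (2 * t) k (Nat.choose (2 * t - 2 * k) (t - k)) =
        Nat.choose (2 * t) t ∧
      bpBiIntersection (2 * t) k (Nat.choose (2 * t - 2 * k) (t - k)) =
        Nat.choose (2 * t) t := by
  obtain ⟨X, Y, hB, hmult⟩ := exists_isBicliqueFamily_card_filter_eq hkt
  constructor
  · exact IsLeast.csInf_eq ⟨⟨X, Y, hB, fun a b hab => (hmult a b hab).ge⟩,
      fun c ⟨_, _, hB', hcov⟩ => choose_le_of_isBicliqueFamily hkt hB' hcov⟩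
  · exact IsLeast.csInf_eq ⟨⟨X, Y, hB, hmult⟩, fun c ⟨_, _, hB', hpart⟩ =>
      choose_le_of_isBicliqueFamily hkt hB' fun a b hab => (hpart a b hab).ge⟩

theorem stmt_3 (k t : ℕ) (hk : 1 ≤ k) (hkt : k ≤ t) :
    bcBiIntersection (2 * t) k (Nat.choose (2 * t - 2 * k) (t - k)) =
        Nat.choose (2 * t) t ∧
      bpBiIntersection (2 * t) k (Nat.choose (2 * t - 2 * k) (t - k)) =
        Nat.choose (2 * t) t :=
  stmt_3_general k t hkt
end

section
/- If G and H are finite graphs with minimum degree δ(G) ≥ 2 and δ(H) ≥ 2, then the key pool number of their Cartesian product satisfies N(G □ H) ≤ N(G) + N(H). -/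
/-- `A` is a `(w,d)`-covering of the graph `G`. -/
def IsCovering {V : Type*} [Fintype V] [DecidableEq V] (G : SimpleGraph V)
    (w d : ℕ) {n : ℕ} (A : Fin n → Finset V) : Prop :=
  ∀ u v : V, G.Adj u v → ∀ W : Finset V, W.card = w → u ∉ W → v ∉ W →
    d ≤ (Finset.univ.filter
      (fun j => u ∈ A j ∧ v ∈ A j ∧ Disjoint W (A j))).card

/-- `N(G,w;d)`: the minimum number of sets in a `(w,d)`-covering of `G`. -/
noncomputable def NGraphCov {V : Type*} [Fintype V] [DecidableEq V]
    (G : SimpleGraph V) (w d : ℕ) : ℕ :=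
  sInf {n : ℕ | ∃ A : Fin n → Finset V, IsCovering G w d A}


/-!
Cover `G □ H` by the cylinders `A i × V(H)` over a covering `A` of `G` and `V(G) × B j` over a
covering `B` of `H`. Take an edge of `G □ H` along `G` and a vertex `x` off it. If the
`G`-coordinate of `x` is off the projected edge, a cylinder over `A` separates. Otherwise the
`H`-coordinate of `x` differs from that of the edge, and since every vertex of `H` has a second
neighbour, `B` separates any vertex of `H` from any other one. Edges along `H` are symmetric.
-/

open Finset

section Covering

variable {V : Type*} [Fintype V] [DecidableEq V] {G : SimpleGraph V} {n : ℕ}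
  {A : Fin n → Finset V}

theorem isCovering_one_one_iff :
    IsCovering G 1 1 A ↔
      ∀ u v, G.Adj u v → ∀ x, x ≠ u → x ≠ v → ∃ j, u ∈ A j ∧ v ∈ A j ∧ x ∉ A j := by
  simp only [IsCovering, card_eq_one, Nat.one_le_iff_ne_zero, Ne, card_eq_zero,
    ← nonempty_iff_ne_empty, Finset.Nonempty, mem_filter, mem_univ, true_and]
  constructor
  · intro h u v huv x hxu hxv
    simpa using h u v huv {x} ⟨x, rfl⟩ (by simpa [eq_comm] using hxu)
      (by simpa [eq_comm] using hxv)
  · rintro h u v huv _ ⟨x, rfl⟩ hu hv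
    simpa using h u v huv x (by simpa [eq_comm] using hu) (by simpa [eq_comm] using hv)

theorem exists_isCovering (G : SimpleGraph V) (w : ℕ) :
    ∃ n, ∃ A : Fin n → Finset V, IsCovering G w 1 A := by
  refine ⟨_, (Fintype.equivFin (Finset V)).symm, fun u v _ W _ hu hv => ?_⟩
  rw [one_le_card]
  refine ⟨Fintype.equivFin (Finset V) {u, v}, ?_⟩
  simp [hu, hv]

theorem exists_isCovering_nGraphCov (G : SimpleGraph V) (w : ℕ) :
    ∃ A : Fin (NGraphCov G w 1) → Finset V, IsCovering G w 1 A :=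
  Nat.sInf_mem (exists_isCovering G w)

theorem nGraphCov_le {w d : ℕ} (hA : IsCovering G w d A) : NGraphCov G w d ≤ n :=
  Nat.sInf_le ⟨A, hA⟩

/-- A second neighbour `c ≠ x` of `b` lets the edge `bc` separate `b` from `x`. -/
theorem IsCovering.exists_mem_not_mem [DecidableRel G.Adj] (hA : IsCovering G 1 1 A) {b : V}
    (hb : 2 ≤ G.degree b) {x : V} (hx : x ≠ b) : ∃ j, b ∈ A j ∧ x ∉ A j := by
  rw [← G.card_neighborFinset_eq_degree] at hb
  obtain ⟨c, hc, hcx⟩ := exists_mem_ne hb x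
  obtain ⟨j, hbj, -, hxj⟩ :=
    isCovering_one_one_iff.mp hA b c ((G.mem_neighborFinset b c).mp hc) x hx hcx.symm
  exact ⟨j, hbj, hxj⟩

end Covering

section BoxProd

variable {α β : Type*} [Fintype α] [Fintype β] {m n : ℕ}
  {A : Fin m → Finset α} {B : Fin n → Finset β}

def boxProdCovering (A : Fin m → Finset α) (B : Fin n → Finset β) : Fin (m + n) → Finset (α × β) :=
  Fin.append (fun i => A i ×ˢ univ) (fun j => univ ×ˢ B j)

theorem exists_boxProdCovering_of_left {p q x : α × β}
    (h : ∃ i, p.1 ∈ A i ∧ q.1 ∈ A i ∧ x.1 ∉ A i) :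
    ∃ k, p ∈ boxProdCovering A B k ∧ q ∈ boxProdCovering A B k ∧ x ∉ boxProdCovering A B k := by
  obtain ⟨i, hi⟩ := h
  exact ⟨Fin.castAdd n i, by simpa [boxProdCovering] using hi⟩

theorem exists_boxProdCovering_of_right {p q x : α × β}
    (h : ∃ j, p.2 ∈ B j ∧ q.2 ∈ B j ∧ x.2 ∉ B j) :
    ∃ k, p ∈ boxProdCovering A B k ∧ q ∈ boxProdCovering A B k ∧ x ∉ boxProdCovering A B k := by
  obtain ⟨j, hj⟩ := h
  exact ⟨Fin.natAdd m j, by simpa [boxProdCovering] using hj⟩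

theorem IsCovering.boxProd [DecidableEq α] [DecidableEq β] {G : SimpleGraph α}
    {H : SimpleGraph β} [DecidableRel G.Adj] [DecidableRel H.Adj] (hA : IsCovering G 1 1 A) (hB : IsCovering H 1 1 B)
    (hG : ∀ a, 2 ≤ G.degree a) (hH : ∀ b, 2 ≤ H.degree b) :
    IsCovering (G □ H) 1 1 (boxProdCovering A B) := by
  rw [isCovering_one_one_iff]
  rintro ⟨u, b⟩ ⟨v, c⟩ hadj ⟨x₁, x₂⟩ hxu hxv
  rcases SimpleGraph.boxProd_adj.mp hadj with ⟨huv, rfl : b = c⟩ | ⟨hbc, rfl : u = v⟩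
  · by_cases hx₁ : x₁ ≠ u ∧ x₁ ≠ v
    · exact exists_boxProdCovering_of_left
        (isCovering_one_one_iff.mp hA u v huv x₁ hx₁.1 hx₁.2)
    · have hx₂ : x₂ ≠ b := by grind
      obtain ⟨j, hbj, hxj⟩ := hB.exists_mem_not_mem (hH b) hx₂
      exact exists_boxProdCovering_of_right ⟨j, hbj, hbj, hxj⟩
  · by_cases hx₂ : x₂ ≠ b ∧ x₂ ≠ c
    · exact exists_boxProdCovering_of_right
        (isCovering_one_one_iff.mp hB b c hbc x₂ hx₂.1 hx₂.2)
    · have hx₁ : x₁ ≠ u := by grind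
      obtain ⟨i, hui, hxi⟩ := hA.exists_mem_not_mem (hG u) hx₁
      exact exists_boxProdCovering_of_left ⟨i, hui, hui, hxi⟩

end BoxProd

theorem stmt_17 {α β : Type*} [Fintype α] [DecidableEq α] [Fintype β]
    [DecidableEq β] (G : SimpleGraph α) (H : SimpleGraph β)
    [DecidableRel G.Adj] [DecidableRel H.Adj]
    (hG : ∀ a : α, 2 ≤ G.degree a) (hH : ∀ b : β, 2 ≤ H.degree b) :
    NGraphCov (G.boxProd H) 1 1 ≤ NGraphCov G 1 1 + NGraphCov H 1 1 := by
  obtain ⟨A, hA⟩ := exists_isCovering_nGraphCov G 1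
  obtain ⟨B, hB⟩ := exists_isCovering_nGraphCov H 1
  exact nGraphCov_le (hA.boxProd hB hG hH)
end
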